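/- arXiv:1201.5949 — 2 statements merged into one kernel-verified Lean document; each statement's English description precedes it below -/
import Mathlib

section
/- Let α > 0 and let p, q, r be pairwise distinct integers. Set λ₁ = (12qr - (6q+6r+1)α + 3α²)/(12(qr - pq - pr + p²)), λ₂ = (12pr - (6p+6r+1)α + 3α²)/(12(pr - pq - qr + q²)), λ₃ = (12pq - (6p+6q+1)α + 3α²)/(12(pq - pr - qr + r²)). Then there exists a constant C > 0 such that for every real θ, | λ₁ (1 - e^{-iθ})^α e^{ipθ} + λ₂ (1 - e^{-iθ})^α e^{iqθ} + λ₃ (1 - e^{-iθ})^α e^{irθ} - (iθ)^α | ≤ C |θ|^{α+3}. (This is the Fourier-multiplier form of the statement that the 3-WSGD operator λ₁ A_{h,p}^α + λ₂ A_{h,q}^α + λ₃ A_{h,r}^α approximates the left Riemann–Liouville derivative of order α with third-order accuracy.) -/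
/-!
Write `ψ z = (1 - e^{-z}) / z`, an entire function with `ψ⁽ⁿ⁾(0) = (-1)ⁿ / (n + 1)`.
For `z = iθ` we have `Re z = 0` and, for small `θ`, `Re ψ z > 0`, so the principal powers split:
`(1 - e^{-z})^α = z^α ψ(z)^α`. The symbol minus `z^α` is then `z^α F(z)` with
`F z = (∑ⱼ lⱼ e^{kⱼ z}) ψ(z)^α - 1` analytic at `0`. By Leibniz's rule the `n`-th derivative of
`F` at `0` only involves the moments `∑ⱼ lⱼ kⱼⁿ` and `(ψ^α)⁽ⁿ⁾(0) = 1, -α/2, α²/4 + α/12`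
(`n = 0, 1, 2`), and the three moment conditions say exactly that these vanish; so `F` vanishes to
order three and the difference is `O(|θ|^{α+3})` near `0`. Away from `0`, both the symbol and
`(iθ)^α` are `O(1 + |θ|^α)`, which is `O(|θ|^{α+3})` there.
-/

open Complex Filter Asymptotics Topology

theorem AnalyticAt.isBigO_sub_pow_of_natCast_le_analyticOrderAt {𝕜 E : Type*}
    [NontriviallyNormedField 𝕜] [NormedAddCommGroup E] [NormedSpace 𝕜 E] {f : 𝕜 → E} {z₀ : 𝕜}
    {n : ℕ} (hf : AnalyticAt 𝕜 f z₀) (hn : n ≤ analyticOrderAt f z₀) :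
    f =O[𝓝 z₀] fun z => (z - z₀) ^ n := by
  obtain ⟨g, hg, hfg⟩ := (natCast_le_analyticOrderAt hf).1 hn
  have hg1 : g =O[𝓝 z₀] fun _ => (1 : 𝕜) := hg.continuousAt.tendsto.isBigO_one 𝕜
  refine ((isBigO_refl (fun z => (z - z₀) ^ n) _).smul hg1).congr' (hfg.mono fun z hz => hz.symm) ?_
  simp

theorem mul_cpow_of_re_nonneg_of_re_pos {a b : ℂ} (ha : 0 ≤ a.re) (hb : 0 < b.re) (s : ℂ) :
    (a * b) ^ s = a ^ s * b ^ s := by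
  rcases eq_or_ne a 0 with rfl | ha0
  · rcases eq_or_ne s 0 with rfl | hs <;> simp [*]
  have hb0 : b ≠ 0 := fun h => by simp [h] at hb
  have harg : a.arg + b.arg ∈ Set.Ioc (-Real.pi) Real.pi := by
    have ha' := abs_le.1 (abs_arg_le_pi_div_two_iff.2 ha)
    have hb' := abs_lt.1 (abs_arg_lt_pi_div_two_iff.2 (.inl hb))
    exact ⟨by linarith [ha'.1, hb'.1], by linarith [ha'.2, hb'.2]⟩
  rw [cpow_def_of_ne_zero (mul_ne_zero ha0 hb0), cpow_def_of_ne_zero ha0,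
    cpow_def_of_ne_zero hb0, log_mul ha0 hb0 harg, add_mul, exp_add]

theorem iteratedDeriv_two_cpow_const {f : ℂ → ℂ} {x : ℂ} (c : ℂ) (hf : AnalyticAt ℂ f x)
    (hx : f x ∈ slitPlane) :
    iteratedDeriv 2 (fun z => f z ^ c) x =
      c * (c - 1) * f x ^ (c - 2) * deriv f x ^ 2 + c * f x ^ (c - 1) * iteratedDeriv 2 f x := by
  have hderiv : deriv (fun z => f z ^ c) =ᶠ[𝓝 x] fun z => c * f z ^ (c - 1) * deriv f z := by
    filter_upwards [hf.eventually_analyticAt,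
      hf.continuousAt.preimage_mem_nhds (isOpen_slitPlane.mem_nhds hx)] with z hfz hz
    exact (hfz.differentiableAt.hasDerivAt.cpow_const hz).deriv
  have hprod := ((hf.differentiableAt.hasDerivAt.cpow_const (c := c - 1) hx).const_mul c).fun_mul
    hf.deriv.differentiableAt.hasDerivAt
  rw [iteratedDeriv_succ, iteratedDeriv_one, hderiv.deriv_eq, hprod.deriv, iteratedDeriv_succ,
    iteratedDeriv_one, show c - 1 - 1 = c - 2 by ring]
  ring

theorem iteratedDeriv_sum_mul_cexp_const_mul {ι : Type*} (s : Finset ι) (l k : ι → ℂ) (n : ℕ)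
    (x : ℂ) : iteratedDeriv n (fun z => ∑ j ∈ s, l j * exp (k j * z)) x =
      ∑ j ∈ s, l j * k j ^ n * exp (k j * x) := by
  rw [iteratedDeriv_fun_sum (fun j _ => by fun_prop)]
  refine Finset.sum_congr rfl fun j _ => ?_
  rw [iteratedDeriv_const_mul _ (by fun_prop), iteratedDeriv_cexp_const_mul, mul_assoc]

theorem exists_pos_norm_le_mul_abs_rpow {E : Type*} [NormedAddCommGroup E] {f : ℝ → E}
    {β γ A : ℝ} (hβ : 0 ≤ β) (hγβ : γ ≤ β) (hf0 : f =O[𝓝 0] fun θ => |θ| ^ β)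
    (hf : ∀ θ, ‖f θ‖ ≤ A + |θ| ^ γ) : ∃ C > 0, ∀ θ, ‖f θ‖ ≤ C * |θ| ^ β := by
  obtain ⟨c, hc⟩ := hf0.bound
  obtain ⟨δ, hδ, hnear⟩ := Metric.eventually_nhds_iff.1 hc
  refine ⟨|c| + |A| / δ ^ β + δ ^ (γ - β), by positivity, fun θ => ?_⟩
  have hθβ : 0 ≤ |θ| ^ β := by positivity
  rcases lt_or_ge |θ| δ with hθ | hθ
  · have hθc : ‖f θ‖ ≤ c * |θ| ^ β := by
      have := hnear (by simpa using hθ)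
      rwa [Real.norm_eq_abs, abs_of_nonneg hθβ] at this
    have : c * |θ| ^ β ≤ (|c| + |A| / δ ^ β + δ ^ (γ - β)) * |θ| ^ β := by
      gcongr
      linarith [le_abs_self c, (by positivity : 0 ≤ |A| / δ ^ β + δ ^ (γ - β))]
    linarith
  · have hA : A ≤ |A| / δ ^ β * |θ| ^ β := by
      rw [div_mul_eq_mul_div, le_div_iff₀ (by positivity)]
      exact mul_le_mul (le_abs_self A) (Real.rpow_le_rpow hδ.le hθ hβ) (by positivity)
        (abs_nonneg A)
    have hγ : |θ| ^ γ ≤ δ ^ (γ - β) * |θ| ^ β := by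
      rw [← sub_add_cancel γ β, Real.rpow_add (hδ.trans_le hθ), add_sub_cancel_right]
      exact mul_le_mul_of_nonneg_right (Real.rpow_le_rpow_of_nonpos hδ hθ (sub_nonpos.2 hγβ)) hθβ
    have : 0 ≤ |c| * |θ| ^ β := by positivity
    linarith [hf θ]

noncomputable def oneSubExpNegDiv : ℂ → ℂ := dslope (fun z => 1 - exp (-z)) 0

theorem mul_oneSubExpNegDiv (z : ℂ) : z * oneSubExpNegDiv z = 1 - exp (-z) := by
  simpa [oneSubExpNegDiv] using sub_smul_dslope (fun z => 1 - exp (-z)) 0 z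

theorem differentiable_oneSubExpNegDiv : Differentiable ℂ oneSubExpNegDiv := by
  rw [← differentiableOn_univ, oneSubExpNegDiv, differentiableOn_dslope Filter.univ_mem]
  fun_prop

theorem analyticAt_oneSubExpNegDiv (z : ℂ) : AnalyticAt ℂ oneSubExpNegDiv z :=
  differentiable_oneSubExpNegDiv.analyticAt z

theorem iteratedDeriv_oneSubExpNegDiv_zero (n : ℕ) :
    iteratedDeriv n oneSubExpNegDiv 0 = (-1) ^ n / (n + 1) := by
  have hψ : ContDiff ℂ (n + 1) oneSubExpNegDiv := differentiable_oneSubExpNegDiv.contDiff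
  -- Differentiate `z * ψ z = 1 - exp (-z)` `n + 1` times at `0`; by Leibniz's rule only
  -- the term `(n + 1) * ψ⁽ⁿ⁾ 0` survives on the left.
  have key := congrArg (iteratedDeriv (n + 1) · 0) (funext mul_oneSubExpNegDiv)
  rw [iteratedDeriv_fun_mul (by fun_prop) hψ.contDiffAt, Finset.sum_eq_single 1] at key
  · have hexp : iteratedDeriv (n + 1) (fun x : ℂ => exp (-x)) 0 = (-1) ^ (n + 1) := by
      simpa using congrFun (iteratedDeriv_cexp_const_mul (n + 1) (-1)) 0
    rw [iteratedDeriv_const_sub n.succ_pos, iteratedDeriv_neg, hexp] at key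
    simp only [Nat.choose_one_right, Nat.cast_add, Nat.cast_one, iteratedDeriv_fun_id_zero,
      ↓reduceIte, mul_one, add_tsub_cancel_right] at key
    field_simp
    linear_combination key
  · intro i _ hi
    simp [iteratedDeriv_fun_id_zero, hi]
  · simp

theorem oneSubExpNegDiv_zero : oneSubExpNegDiv 0 = 1 := by
  simpa using iteratedDeriv_oneSubExpNegDiv_zero 0

theorem analyticAt_oneSubExpNegDiv_cpow (c : ℂ) :
    AnalyticAt ℂ (fun z => oneSubExpNegDiv z ^ c) 0 :=
  (analyticAt_oneSubExpNegDiv 0).cpow analyticAt_const (by simp [oneSubExpNegDiv_zero])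

theorem iteratedDeriv_one_oneSubExpNegDiv_cpow_zero (c : ℂ) :
    iteratedDeriv 1 (fun z => oneSubExpNegDiv z ^ c) 0 = -c / 2 := by
  rw [iteratedDeriv_one, deriv_cpow_const (analyticAt_oneSubExpNegDiv 0).differentiableAt
    (by simp [oneSubExpNegDiv_zero]), ← iteratedDeriv_one, iteratedDeriv_oneSubExpNegDiv_zero,
    oneSubExpNegDiv_zero]
  simp only [one_cpow, Nat.cast_one]
  ring

theorem iteratedDeriv_two_oneSubExpNegDiv_cpow_zero (c : ℂ) :
    iteratedDeriv 2 (fun z => oneSubExpNegDiv z ^ c) 0 = c ^ 2 / 4 + c / 12 := by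
  rw [iteratedDeriv_two_cpow_const c (analyticAt_oneSubExpNegDiv 0)
    (by simp [oneSubExpNegDiv_zero]), ← iteratedDeriv_one, iteratedDeriv_oneSubExpNegDiv_zero,
    iteratedDeriv_oneSubExpNegDiv_zero, oneSubExpNegDiv_zero]
  simp only [one_cpow, Nat.cast_one, Nat.cast_ofNat]
  ring

theorem one_sub_exp_neg_cpow {z : ℂ} (hz : 0 ≤ z.re) (hψ : 0 < (oneSubExpNegDiv z).re) (s : ℂ) :
    (1 - exp (-z)) ^ s = z ^ s * oneSubExpNegDiv z ^ s := by
  rw [← mul_oneSubExpNegDiv, mul_cpow_of_re_nonneg_of_re_pos hz hψ]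

section Defect

variable {ι : Type*} (s : Finset ι) (l k : ι → ℂ) (c : ℂ)

noncomputable def weightedShiftDefect (z : ℂ) : ℂ :=
  (∑ j ∈ s, l j * exp (k j * z)) * oneSubExpNegDiv z ^ c - 1

theorem analyticAt_weightedShiftDefect : AnalyticAt ℂ (weightedShiftDefect s l k c) 0 := by
  have := analyticAt_oneSubExpNegDiv_cpow c
  unfold weightedShiftDefect
  fun_prop

theorem three_le_analyticOrderAt_weightedShiftDefect (h0 : ∑ j ∈ s, l j = 1)
    (h1 : ∑ j ∈ s, l j * k j = c / 2) (h2 : ∑ j ∈ s, l j * k j ^ 2 = c ^ 2 / 4 - c / 12) :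
    3 ≤ analyticOrderAt (weightedShiftDefect s l k c) 0 := by
  have hG := analyticAt_oneSubExpNegDiv_cpow c
  have hT : AnalyticAt ℂ (fun z => ∑ j ∈ s, l j * exp (k j * z)) 0 := by fun_prop
  have hTG : AnalyticAt ℂ (fun z => (∑ j ∈ s, l j * exp (k j * z)) * oneSubExpNegDiv z ^ c) 0 :=
    hT.mul hG
  have hTn (n : ℕ) : iteratedDeriv n (fun z => ∑ j ∈ s, l j * exp (k j * z)) 0 =
      ∑ j ∈ s, l j * k j ^ n := by
    simp [iteratedDeriv_sum_mul_cexp_const_mul]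
  refine (natCast_le_analyticOrderAt_iff_iteratedDeriv_eq_zero (n := 3)
    (analyticAt_weightedShiftDefect s l k c)).2 fun i hi => ?_
  unfold weightedShiftDefect
  interval_cases i
  · simp [oneSubExpNegDiv_zero, h0]
  all_goals
    rw [iteratedDeriv_fun_sub hTG.contDiffAt contDiffAt_const,
      iteratedDeriv_fun_mul hT.contDiffAt hG.contDiffAt]
    simp only [Finset.sum_range_succ, Finset.range_one, Finset.sum_singleton, Nat.reduceAdd,
      Nat.choose_zero_right, Nat.choose_succ_self_right, Nat.choose_self, Nat.cast_one,
      Nat.cast_ofNat, Nat.add_one_sub_one, tsub_zero, tsub_self, pow_zero, pow_one, mul_one,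
      one_mul, zero_add, hTn, h0, h1, h2, iteratedDeriv_one_oneSubExpNegDiv_cpow_zero,
      iteratedDeriv_two_oneSubExpNegDiv_cpow_zero, iteratedDeriv_zero, oneSubExpNegDiv_zero,
      one_cpow, iteratedDeriv_const, one_ne_zero, OfNat.ofNat_ne_zero, ↓reduceIte, sub_zero]
    ring

end Defect

section Symbol

variable {ι : Type*} (s : Finset ι) (l k : ι → ℝ) (α : ℝ)

/-- The Fourier multiplier `∑ⱼ lⱼ (1 - e^{-iθ})^α e^{i kⱼ θ}` of the operator `∑ⱼ lⱼ A_{h,kⱼ}^α`. -/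
noncomputable def weightedShiftedGrunwaldSymbol (θ : ℝ) : ℂ :=
  ∑ j ∈ s, (l j : ℂ) * (1 - exp (-(θ * I))) ^ (α : ℂ) * exp (k j * θ * I)

theorem weightedShiftedGrunwaldSymbol_sub_cpow_eventuallyEq :
    (fun θ : ℝ => weightedShiftedGrunwaldSymbol s l k α θ - (θ * I) ^ (α : ℂ)) =ᶠ[𝓝 0]
      fun θ => (θ * I) ^ (α : ℂ) *
        weightedShiftDefect s (fun j => (l j : ℂ)) (fun j => (k j : ℂ)) α (θ * I) := by
  have hψ : ContinuousAt (fun θ : ℝ => (oneSubExpNegDiv (θ * I)).re) 0 :=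
    (continuous_re.comp (differentiable_oneSubExpNegDiv.continuous.comp
      (by fun_prop : Continuous fun θ : ℝ => (θ : ℂ) * I))).continuousAt
  filter_upwards [(continuousAt_const (y := (0 : ℝ))).eventually_lt hψ
    (by simp [oneSubExpNegDiv_zero])] with θ hθ
  rw [weightedShiftedGrunwaldSymbol, weightedShiftDefect, one_sub_exp_neg_cpow (by simp) hθ,
    Finset.sum_mul, mul_sub, mul_one, Finset.mul_sum]
  congr 1
  refine Finset.sum_congr rfl fun j _ => ?_
  rw [mul_assoc (k j : ℂ)]
  ring

theorem isBigO_weightedShiftedGrunwaldSymbol_sub_cpow (hα : 0 ≤ α) (h0 : ∑ j ∈ s, l j = 1)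
    (h1 : ∑ j ∈ s, l j * k j = α / 2) (h2 : ∑ j ∈ s, l j * k j ^ 2 = α ^ 2 / 4 - α / 12) :
    (fun θ : ℝ => weightedShiftedGrunwaldSymbol s l k α θ - (θ * I) ^ (α : ℂ)) =O[𝓝 0]
      fun θ => |θ| ^ (α + 3) := by
  have hF := (analyticAt_weightedShiftDefect _ _ _ _).isBigO_sub_pow_of_natCast_le_analyticOrderAt
    (three_le_analyticOrderAt_weightedShiftDefect s (fun j => (l j : ℂ)) (fun j => (k j : ℂ)) α
      (by exact_mod_cast h0) (by exact_mod_cast h1) (by exact_mod_cast h2))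
  have hI : Tendsto (fun θ : ℝ => (θ : ℂ) * I) (𝓝 0) (𝓝 0) :=
    (Continuous.tendsto' (by fun_prop) 0 0 (by simp))
  have hcube : (fun θ : ℝ => ((θ : ℂ) * I - 0) ^ 3) =O[𝓝 0] fun θ => |θ| ^ 3 :=
    isBigO_of_le _ fun θ => by simp
  have hpow : (fun θ : ℝ => ((θ : ℂ) * I) ^ (α : ℂ)) =O[𝓝 0] fun θ => |θ| ^ α :=
    isBigO_of_le _ fun θ => by
      simp [norm_cpow_real, abs_of_nonneg (Real.rpow_nonneg (abs_nonneg θ) α)]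
  refine (weightedShiftedGrunwaldSymbol_sub_cpow_eventuallyEq s l k α).trans_isBigO
    ((hpow.mul ((hF.comp_tendsto hI).trans hcube)).congr_right fun θ => ?_)
  rw [show α + 3 = α + (3 : ℕ) by norm_num, Real.rpow_add_natCast' (abs_nonneg θ) (by positivity)]

theorem norm_weightedShiftedGrunwaldSymbol_sub_cpow_le (hα : 0 ≤ α) (θ : ℝ) :
    ‖weightedShiftedGrunwaldSymbol s l k α θ - (θ * I) ^ (α : ℂ)‖ ≤
      2 ^ α * ∑ j ∈ s, |l j| + |θ| ^ α := by
  have hfactor : ‖(1 - exp (-(θ * I))) ^ (α : ℂ)‖ ≤ 2 ^ α := by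
    rw [norm_cpow_real]
    gcongr
    calc ‖1 - exp (-(θ * I))‖ ≤ ‖(1 : ℂ)‖ + ‖exp ((-θ : ℝ) * I)‖ := by
          rw [ofReal_neg, neg_mul]; exact norm_sub_le _ _
      _ = 2 := by rw [norm_one, norm_exp_ofReal_mul_I]; norm_num
  have hterm (j : ι) : ‖(l j : ℂ) * (1 - exp (-(θ * I))) ^ (α : ℂ) * exp (k j * θ * I)‖ ≤
      2 ^ α * |l j| := by
    rw [norm_mul, norm_mul, ← ofReal_mul, norm_exp_ofReal_mul_I, norm_real, Real.norm_eq_abs,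
      mul_one, mul_comm]
    gcongr
  calc _ ≤ ‖weightedShiftedGrunwaldSymbol s l k α θ‖ + ‖((θ : ℂ) * I) ^ (α : ℂ)‖ :=
        norm_sub_le _ _
    _ ≤ ∑ j ∈ s, 2 ^ α * |l j| + |θ| ^ α := by
      gcongr
      · exact (norm_sum_le _ _).trans (Finset.sum_le_sum fun j _ => hterm j)
      · simp [norm_cpow_real]
    _ = _ := by rw [Finset.mul_sum]

end Symbol

theorem exists_norm_weightedShiftedGrunwaldSymbol_sub_cpow_le {ι : Type*} (s : Finset ι)
    (l k : ι → ℝ) {α : ℝ} (hα : 0 ≤ α) (h0 : ∑ j ∈ s, l j = 1) (h1 : ∑ j ∈ s, l j * k j = α / 2)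
    (h2 : ∑ j ∈ s, l j * k j ^ 2 = α ^ 2 / 4 - α / 12) :
    ∃ C > 0, ∀ θ : ℝ,
      ‖weightedShiftedGrunwaldSymbol s l k α θ - (θ * I) ^ (α : ℂ)‖ ≤ C * |θ| ^ (α + 3) :=
  exists_pos_norm_le_mul_abs_rpow (by linarith) (by linarith)
    (isBigO_weightedShiftedGrunwaldSymbol_sub_cpow s l k α hα h0 h1 h2)
    (norm_weightedShiftedGrunwaldSymbol_sub_cpow_le s l k α hα)

theorem wsgd3_weights_moments {α p q r l1 l2 l3 : ℝ} (hpq : p ≠ q) (hpr : p ≠ r) (hqr : q ≠ r)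
    (hl1 : l1 = (12 * q * r - (6 * q + 6 * r + 1) * α + 3 * α ^ 2)
        / (12 * (q * r - p * q - p * r + p ^ 2)))
    (hl2 : l2 = (12 * p * r - (6 * p + 6 * r + 1) * α + 3 * α ^ 2)
        / (12 * (p * r - p * q - q * r + q ^ 2)))
    (hl3 : l3 = (12 * p * q - (6 * p + 6 * q + 1) * α + 3 * α ^ 2)
        / (12 * (p * q - p * r - q * r + r ^ 2))) :
    l1 + l2 + l3 = 1 ∧ l1 * p + l2 * q + l3 * r = α / 2 ∧
      l1 * p ^ 2 + l2 * q ^ 2 + l3 * r ^ 2 = α ^ 2 / 4 - α / 12 := by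
  have hpq' := sub_ne_zero.2 hpq
  have hpr' := sub_ne_zero.2 hpr
  have hqr' := sub_ne_zero.2 hqr
  rw [show q * r - p * q - p * r + p ^ 2 = (p - q) * (p - r) by ring] at hl1
  rw [show p * r - p * q - q * r + q ^ 2 = -((p - q) * (q - r)) by ring] at hl2
  rw [show p * q - p * r - q * r + r ^ 2 = (p - r) * (q - r) by ring] at hl3
  subst hl1 hl2 hl3
  refine ⟨?_, ?_, ?_⟩ <;> field_simp <;> ring

theorem WSGD3_third_order_multiplier (α : ℝ) (hα : 0 < α) (p q r : ℤ)
    (hpq : p ≠ q) (hpr : p ≠ r) (hqr : q ≠ r)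
    (l1 l2 l3 : ℝ)
    (hl1 : l1 = (12 * (q : ℝ) * (r : ℝ) - (6 * (q : ℝ) + 6 * (r : ℝ) + 1) * α + 3 * α ^ 2)
        / (12 * ((q : ℝ) * (r : ℝ) - (p : ℝ) * (q : ℝ) - (p : ℝ) * (r : ℝ) + (p : ℝ) ^ 2)))
    (hl2 : l2 = (12 * (p : ℝ) * (r : ℝ) - (6 * (p : ℝ) + 6 * (r : ℝ) + 1) * α + 3 * α ^ 2)
        / (12 * ((p : ℝ) * (r : ℝ) - (p : ℝ) * (q : ℝ) - (q : ℝ) * (r : ℝ) + (q : ℝ) ^ 2)))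
    (hl3 : l3 = (12 * (p : ℝ) * (q : ℝ) - (6 * (p : ℝ) + 6 * (q : ℝ) + 1) * α + 3 * α ^ 2)
        / (12 * ((p : ℝ) * (q : ℝ) - (p : ℝ) * (r : ℝ) - (q : ℝ) * (r : ℝ) + (r : ℝ) ^ 2))) :
    ∃ C > (0 : ℝ), ∀ θ : ℝ,
      ‖((l1 : ℂ) * (1 - Complex.exp (-((θ : ℂ) * Complex.I))) ^ (α : ℂ)
            * Complex.exp ((p : ℂ) * (θ : ℂ) * Complex.I)
          + (l2 : ℂ) * (1 - Complex.exp (-((θ : ℂ) * Complex.I))) ^ (α : ℂ)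
            * Complex.exp ((q : ℂ) * (θ : ℂ) * Complex.I)
          + (l3 : ℂ) * (1 - Complex.exp (-((θ : ℂ) * Complex.I))) ^ (α : ℂ)
            * Complex.exp ((r : ℂ) * (θ : ℂ) * Complex.I)
          - ((θ : ℂ) * Complex.I) ^ (α : ℂ))‖
        ≤ C * |θ| ^ (α + 3) := by
  obtain ⟨h0, h1, h2⟩ := wsgd3_weights_moments (Int.cast_injective.ne hpq)
    (Int.cast_injective.ne hpr) (Int.cast_injective.ne hqr) hl1 hl2 hl3
  obtain ⟨C, hC, hbound⟩ := exists_norm_weightedShiftedGrunwaldSymbol_sub_cpow_le Finset.univ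
    ![l1, l2, l3] ![(p : ℝ), q, r] hα.le (by simpa [Fin.sum_univ_three] using h0)
    (by simpa [Fin.sum_univ_three] using h1) (by simpa [Fin.sum_univ_three] using h2)
  refine ⟨C, hC, fun θ => le_of_eq_of_le ?_ (hbound θ)⟩
  simp [weightedShiftedGrunwaldSymbol, Fin.sum_univ_three]
end

section
/- Let 1 ≤ α ≤ 2 and let w_k be the WSGD weights for (p,q)=(1,-1). Then for every x ∈ [0, π], Σ_{k=0}^∞ w_k cos((k-1)x) = (2 sin(x/2))^α · [ (α/2) sin( (α/2)(x-π) ) sin(x) + cos( (α/2)(x-π) ) cos(x) ]. -/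
/-! For `‖w‖ < 1` the Grünwald coefficients are the coefficients of the binomial series of
`(1 - w) ^ α`. For `1 ≤ α ≤ 2` they are nonnegative from `k = 2` on, with partial sums
`∑_{k ≤ n} g_k = (-1)^n binom(α - 1, n)` bounded, hence absolutely summable; dominated convergence
along the radius then extends the identity to the closed disc. The WSGD weights have generating
function `((2 + α)/4 + (2 - α)/4 w²) (1 - w) ^ α`, and at `w = e^{ix}` the polar form
`1 - e^{ix} = 2 sin(x/2) e^{i(x - π)/2}` turns the real part of `e^{-ix}` times it into the
claimed formula. -/

/-- Grünwald coefficients `g_k = (-1)^k * binom(α, k)`. -/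
noncomputable def gru (α : ℝ) (k : ℕ) : ℝ :=
  (-1 : ℝ) ^ k * (∏ i ∈ Finset.range k, (α - (i : ℝ))) / (Nat.factorial k : ℝ)

/-- WSGD weights for `(p,q) = (1,0)`. -/
noncomputable def w10 (α : ℝ) : ℕ → ℝ
  | 0 => α / 2 * gru α 0
  | k + 1 => α / 2 * gru α (k + 1) + (2 - α) / 2 * gru α k

/-- WSGD weights for `(p,q) = (1,-1)`. -/
noncomputable def w1m1 (α : ℝ) : ℕ → ℝ
  | 0 => (2 + α) / 4 * gru α 0
  | 1 => (2 + α) / 4 * gru α 1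
  | k + 2 => (2 + α) / 4 * gru α (k + 2) + (2 - α) / 4 * gru α k

open Filter Topology
open scoped Real

lemma gru_eq_neg_one_pow_mul_choose (α : ℝ) (k : ℕ) : gru α k = (-1) ^ k * Ring.choose α k := by
  rw [gru, Ring.choose_eq_smul, ← Polynomial.aeval_eq_smeval, ← Polynomial.eval_map_algebraMap,
    descPochhammer_map, descPochhammer_eval_eq_prod_range, smul_eq_mul]
  ring

lemma gru_succ (α : ℝ) (k : ℕ) : gru α (k + 1) = gru α k * ((k - α) / (k + 1)) := by
  rw [gru, gru, Finset.prod_range_succ, Nat.factorial_succ]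
  push_cast
  field_simp
  ring

@[simp] lemma gru_zero (α : ℝ) : gru α 0 = 1 := by simp [gru]

lemma gru_one (α : ℝ) : gru α 1 = -α := by simp [gru_succ]

lemma gru_sub_one_succ (α : ℝ) (k : ℕ) :
    gru (α - 1) (k + 1) = gru α (k + 1) + gru (α - 1) k := by
  have := Ring.choose_succ_succ (α - 1) k
  rw [sub_add_cancel] at this
  simp only [gru_eq_neg_one_pow_mul_choose, this, pow_succ]
  ring

lemma sum_range_succ_gru (α : ℝ) (n : ℕ) :
    ∑ k ∈ Finset.range (n + 1), gru α k = gru (α - 1) n := by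
  induction n with
  | zero => simp
  | succ n ih => rw [Finset.sum_range_succ, ih, gru_sub_one_succ]; ring

lemma abs_gru_le_one {β : ℝ} (hβ : |β| ≤ 1) (n : ℕ) : |gru β n| ≤ 1 := by
  induction n with
  | zero => simp
  | succ n ih =>
    have hratio : |((n : ℝ) - β) / (n + 1)| ≤ 1 := by
      rw [abs_div, abs_of_pos (by positivity : (0 : ℝ) < n + 1), div_le_one (by positivity)]
      linarith [abs_sub (n : ℝ) β, Nat.abs_cast (R := ℝ) n]
    rw [gru_succ, abs_mul]
    exact mul_le_one₀ ih (abs_nonneg _) hratio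

lemma gru_add_two_nonneg {α : ℝ} (hα1 : 1 ≤ α) (hα2 : α ≤ 2) (k : ℕ) : 0 ≤ gru α (k + 2) := by
  induction k with
  | zero =>
    rw [gru_succ, gru_one]
    push_cast
    nlinarith
  | succ k ih =>
    rw [show k + 1 + 2 = k + 2 + 1 by ring, gru_succ]
    push_cast
    exact mul_nonneg ih (div_nonneg (by linarith) (by positivity))

lemma summable_abs_gru {α : ℝ} (hα1 : 1 ≤ α) (hα2 : α ≤ 2) : Summable fun k => |gru α k| := by
  refine (summable_nat_add_iff 2).1 ?_
  simp only [abs_of_nonneg (gru_add_two_nonneg hα1 hα2 _)]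
  refine summable_of_sum_range_le (c := α) (gru_add_two_nonneg hα1 hα2) fun n => ?_
  have hsum : ∑ k ∈ Finset.range n, gru α (k + 2) = gru (α - 1) (n + 1) - 1 + α := by
    have := sum_range_succ_gru α (n + 1)
    rw [Finset.sum_range_succ', Finset.sum_range_succ'] at this
    simp only [zero_add, gru_one, gru_zero] at this
    linarith
  have := abs_le.1 (abs_gru_le_one (β := α - 1) (abs_le.2 ⟨by linarith, by linarith⟩) (n + 1))
  linarith

lemma hasSum_gru_mul_pow (α : ℝ) {w : ℂ} (hw : ‖w‖ < 1) :
    HasSum (fun k => (gru α k : ℂ) * w ^ k) ((1 - w) ^ (α : ℂ)) := by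
  have hmem : -w ∈ Metric.eball (0 : ℂ) 1 := by
    rw [← ENNReal.ofReal_one, Metric.eball_ofReal]
    simpa using hw
  have h := (Complex.one_add_cpow_hasFPowerSeriesOnBall_zero (a := α)).hasSum hmem
  have hcoeff : (fun n => Ring.choose (α : ℂ) n • (-w) ^ n) = fun k => (gru α k : ℂ) * w ^ k := by
    ext k
    rw [gru_eq_neg_one_pow_mul_choose, smul_eq_mul, neg_pow]
    push_cast
    ring
  simp only [binomialSeries_apply, List.ofFn_const, List.prod_replicate, hcoeff] at h
  simpa [← sub_eq_add_neg] using h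

lemma hasSum_mul_pow_of_tendsto_radial {c : ℕ → ℂ} (hc : Summable fun k => ‖c k‖) {z L : ℂ}
    (hz : ‖z‖ ≤ 1)
    (hL : Tendsto (fun r : ℝ => ∑' k, c k * ((r : ℂ) * z) ^ k) (𝓝[<] 1) (𝓝 L)) :
    HasSum (fun k => c k * z ^ k) L := by
  have hdom : ∀ᶠ r : ℝ in 𝓝[<] 1, ∀ k, ‖c k * ((r : ℂ) * z) ^ k‖ ≤ ‖c k‖ := by
    filter_upwards [Ioo_mem_nhdsLT (show (-1 : ℝ) < 1 by norm_num)] with r hr k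
    have hrz : ‖(r : ℂ) * z‖ ≤ 1 := by
      rw [norm_mul, Complex.norm_real, Real.norm_eq_abs]
      exact mul_le_one₀ (abs_le.2 ⟨hr.1.le, hr.2.le⟩) (norm_nonneg z) hz
    rw [norm_mul, norm_pow]
    exact mul_le_of_le_one_right (norm_nonneg _) (pow_le_one₀ (norm_nonneg _) hrz)
  have hlim : Tendsto (fun r : ℝ => ∑' k, c k * ((r : ℂ) * z) ^ k) (𝓝[<] 1)
      (𝓝 (∑' k, c k * z ^ k)) := by
    refine tendsto_tsum_of_dominated_convergence hc (fun k => ?_) hdom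
    have hcont : Continuous fun r : ℝ => c k * ((r : ℂ) * z) ^ k := by fun_prop
    simpa using hcont.continuousWithinAt.tendsto (s := Set.Iio 1) (x := 1)
  rw [tendsto_nhds_unique hL hlim]
  exact (Summable.of_norm_bounded hc fun k => by
    rw [norm_mul, norm_pow]
    exact mul_le_of_le_one_right (norm_nonneg _) (pow_le_one₀ (norm_nonneg _) hz)).hasSum

lemma hasSum_gru_mul_pow_of_norm_le_one {α : ℝ} (hα1 : 1 ≤ α) (hα2 : α ≤ 2) {z : ℂ}
    (hz : ‖z‖ ≤ 1) : HasSum (fun k => (gru α k : ℂ) * z ^ k) ((1 - z) ^ (α : ℂ)) := by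
  refine hasSum_mul_pow_of_tendsto_radial (by simpa using summable_abs_gru hα1 hα2) hz ?_
  have hre : 0 ≤ (1 - z).re := by
    rw [Complex.sub_re, Complex.one_re, sub_nonneg]
    exact (Complex.re_le_norm z).trans hz
  have hpow : ContinuousAt (fun w : ℂ => w ^ (α : ℂ)) (1 - z) :=
    Complex.continuousAt_cpow_const_of_re_pos (Or.inl hre) (by rw [Complex.ofReal_re]; linarith)
  have hbase : Tendsto (fun r : ℝ => 1 - (r : ℂ) * z) (𝓝[<] 1) (𝓝 (1 - z)) := by
    have hcont : Continuous fun r : ℝ => 1 - (r : ℂ) * z := by fun_prop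
    simpa using hcont.continuousWithinAt.tendsto (s := Set.Iio 1) (x := 1)
  refine (hpow.tendsto.comp hbase).congr' ?_
  filter_upwards [Ioo_mem_nhdsLT (show (-1 : ℝ) < 1 by norm_num)] with r hr
  refine (hasSum_gru_mul_pow α ?_).tsum_eq.symm
  rw [norm_mul, Complex.norm_real, Real.norm_eq_abs]
  exact mul_lt_one_of_nonneg_of_lt_one_left (abs_nonneg r) (abs_lt.2 hr) hz

lemma hasSum_w1m1_mul_pow (α : ℝ) {z S : ℂ} (h : HasSum (fun k => (gru α k : ℂ) * z ^ k) S) :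
    HasSum (fun k => (w1m1 α k : ℂ) * z ^ k) (((2 + α) / 4 + (2 - α) / 4 * z ^ 2) * S) := by
  set t : ℕ → ℂ := fun k => (w1m1 α k : ℂ) * z ^ k - (2 + α) / 4 * (gru α k * z ^ k) with ht
  have ht_add_two : (fun k => t (k + 2)) = fun k => (2 - α) / 4 * z ^ 2 * (gru α k * z ^ k) := by
    ext k
    simp only [ht, w1m1]
    push_cast
    ring
  have hshift : HasSum t ((2 - α) / 4 * z ^ 2 * S) := by
    have h01 : ∑ k ∈ Finset.range 2, t k = 0 := by
      simp only [ht, Finset.sum_range_succ, Finset.sum_range_zero, w1m1, gru_zero, gru_one]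
      push_cast
      ring
    rw [← hasSum_nat_add_iff' 2, h01, sub_zero, ht_add_two]
    exact h.mul_left _
  have hsum := (h.mul_left ((2 + α) / 4 : ℂ)).add hshift
  simp only [ht, add_sub_cancel] at hsum
  rwa [add_mul]

section
open Complex

lemma one_sub_exp_mul_I (x : ℝ) :
    1 - exp (x * I) = ((2 * Real.sin (x / 2) : ℝ) : ℂ) * exp (((x - π) / 2 : ℝ) * I) := by
  have hcos : Real.cos ((x - π) / 2) = Real.sin (x / 2) := by
    rw [sub_div, Real.cos_sub_pi_div_two]
  have hsin : Real.sin ((x - π) / 2) = -Real.cos (x / 2) := by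
    rw [sub_div, Real.sin_sub_pi_div_two]
  have hx : x = 2 * (x / 2) := by ring
  apply Complex.ext <;>
    simp only [sub_re, sub_im, one_re, one_im, mul_re, mul_im, ofReal_re, ofReal_im,
      exp_ofReal_mul_I_re, exp_ofReal_mul_I_im, hcos, hsin]
  · rw [hx, Real.cos_two_mul, ← hx]
    nlinarith [Real.sin_sq_add_cos_sq (x / 2)]
  · rw [hx, Real.sin_two_mul, ← hx]
    ring

lemma ofReal_mul_exp_mul_I_cpow {r θ a : ℝ} (hr : 0 ≤ r) (hθ : θ ∈ Set.Ioc (-π) π) (ha : a ≠ 0) :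
    ((r : ℂ) * exp (θ * I)) ^ (a : ℂ) = ((r ^ a : ℝ) : ℂ) * exp ((a * θ : ℝ) * I) := by
  rcases hr.eq_or_lt with rfl | hr
  · simp [Real.zero_rpow ha, ha]
  rw [cpow_def_of_ne_zero (mul_ne_zero (by exact_mod_cast hr.ne') (exp_ne_zero _)),
    log_ofReal_mul hr (exp_ne_zero _), log_exp (by simpa using hθ.1) (by simpa using hθ.2),
    Real.rpow_def_of_pos hr, ofReal_exp, ← exp_add]
  congr 1
  push_cast
  ring

lemma one_sub_exp_mul_I_cpow {x : ℝ} (hx0 : 0 ≤ x) (hxpi : x ≤ π) {a : ℝ} (ha : a ≠ 0) :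
    (1 - exp (x * I)) ^ (a : ℂ) =
      ((2 * Real.sin (x / 2)) ^ a : ℝ) * exp ((a / 2 * (x - π) : ℝ) * I) := by
  rw [one_sub_exp_mul_I, ofReal_mul_exp_mul_I_cpow
    (mul_nonneg zero_le_two (Real.sin_nonneg_of_nonneg_of_le_pi (by linarith) (by linarith)))
    ⟨by linarith [Real.pi_pos], by linarith⟩ ha, mul_div_assoc', div_mul_eq_mul_div]

lemma hasSum_w1m1_mul_exp {α : ℝ} (hα1 : 1 ≤ α) (hα2 : α ≤ 2) (x : ℝ) :
    HasSum (fun k : ℕ => (w1m1 α k : ℂ) * exp ((((k : ℝ) - 1) * x : ℝ) * I))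
      ((((2 + α) / 4 : ℝ) * exp ((-x : ℝ) * I) + ((2 - α) / 4 : ℝ) * exp (x * I)) *
        (1 - exp (x * I)) ^ (α : ℂ)) := by
  have hinv : exp ((-x : ℝ) * I) * exp (x * I) = 1 := by
    rw [← exp_add]; push_cast; simp
  have hsum := (hasSum_w1m1_mul_pow α
    (hasSum_gru_mul_pow_of_norm_le_one hα1 hα2 (norm_exp_ofReal_mul_I x).le)).mul_left
    (exp ((-x : ℝ) * I))
  have hvalue : (((2 + α) / 4 : ℝ) * exp ((-x : ℝ) * I) + ((2 - α) / 4 : ℝ) * exp (x * I)) *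
      (1 - exp (x * I)) ^ (α : ℂ) = exp ((-x : ℝ) * I) *
        (((2 + α) / 4 + (2 - α) / 4 * exp (x * I) ^ 2) * (1 - exp (x * I)) ^ (α : ℂ)) := by
    push_cast at hinv ⊢
    linear_combination (-(2 - α) / 4 * exp (x * I) * (1 - exp (x * I)) ^ (α : ℂ)) * hinv
  rw [hvalue]
  refine hsum.congr_fun fun k => ?_
  rw [mul_left_comm, ← exp_nat_mul, ← exp_add]
  push_cast
  ring_nf

end

open Complex in
theorem w1m1_generating_function (α : ℝ) (hα1 : 1 ≤ α) (hα2 : α ≤ 2)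
    (x : ℝ) (hx0 : 0 ≤ x) (hxpi : x ≤ Real.pi) :
    HasSum (fun k : ℕ => w1m1 α k * Real.cos (((k : ℝ) - 1) * x))
      ((2 * Real.sin (x / 2)) ^ α *
        (α / 2 * Real.sin (α / 2 * (x - Real.pi)) * Real.sin x
          + Real.cos (α / 2 * (x - Real.pi)) * Real.cos x)) := by
  have hsum := hasSum_re (hasSum_w1m1_mul_exp hα1 hα2 x)
  rw [one_sub_exp_mul_I_cpow hx0 hxpi (by positivity)] at hsum
  convert hsum using 1
  · ext k
    rw [re_ofReal_mul, exp_ofReal_mul_I_re]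
  · simp only [mul_re, add_re, mul_im, add_im, ofReal_re, ofReal_im, exp_ofReal_mul_I_re,
      exp_ofReal_mul_I_im, Real.cos_neg, Real.sin_neg]
    ring
end
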